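/- Define ρ = (4/3)^(1/4), b(k) = ((k−1)! ρ)^(1/(k−1)) for k ≥ 2, λ(k) = log(b(k+1)/b(k)) for k ≥ 2, α(2) = 2/ρ^3, α(3) = 6/(ρ^4 b(3) b(5)), and α(k) = α(k−1)/(1 + k(λ(k−1) − λ(k))) for k ≥ 4. Then the sequence a(k) := α(k)·b(k) is strictly increasing for k ≥ 2. -/
import Mathlib

noncomputable def rho : ℝ := (4/3 : ℝ) ^ ((1 : ℝ)/4)

noncomputable def b : ℕ → ℝ
  | 0 => 1
  | 1 => 1
  | (k+2) => (((k+1).factorial : ℝ) * rho) ^ ((1 : ℝ)/(k+1))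

noncomputable def lam (k : ℕ) : ℝ := Real.log (b (k+1) / b k)

noncomputable def alpha : ℕ → ℝ
  | 0 => 1
  | 1 => Real.sqrt (2 / rho ^ 5)
  | 2 => 2 / rho ^ 3
  | 3 => 6 / (rho ^ 4 * b 3 * b 5)
  | (k+4) => alpha (k+3) / (1 + ((k : ℝ) + 4) * (lam (k+3) - lam (k+4)))

lemma rho_pos : 0 < rho := Real.rpow_pos_of_pos (by norm_num) _

lemma rho_pow4 : rho ^ 4 = 4/3 := by
  rw [rho, ← Real.rpow_natCast ((4/3:ℝ) ^ ((1:ℝ)/4)) 4, ← Real.rpow_mul (by norm_num)]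
  norm_num

lemma one_lt_rho : 1 < rho := by
  rw [rho]
  apply Real.one_lt_rpow_iff_of_pos (by norm_num) |>.mpr
  norm_num

lemma rho_lt_two : rho < 2 := by
  by_contra h
  push_neg at h
  have : (2:ℝ)^4 ≤ rho^4 := pow_le_pow_left₀ (by norm_num) h 4
  rw [rho_pow4] at this
  norm_num at this

lemma rho_lt_43 : rho < 4/3 := by
  by_contra h
  push_neg at h
  have : (4/3:ℝ)^4 ≤ rho^4 := pow_le_pow_left₀ (by norm_num) h 4
  rw [rho_pow4] at this
  norm_num at this

lemma factrho_pos (j : ℕ) : (0:ℝ) < ((j+1).factorial : ℝ) * rho :=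
  mul_pos (by exact_mod_cast Nat.factorial_pos _) rho_pos

lemma b_pos (k : ℕ) : 0 < b k := by
  match k with
  | 0 => norm_num [b]
  | 1 => norm_num [b]
  | (j+2) =>
    exact Real.rpow_pos_of_pos (factrho_pos j) _

lemma b_pow (j : ℕ) : b (j+2) ^ (j+1) = ((j+1).factorial : ℝ) * rho := by
  show ((((j+1).factorial : ℝ) * rho) ^ ((1 : ℝ)/(j+1))) ^ (j+1) = _
  rw [show (1 : ℝ)/(j+1) = (((j+1:ℕ) : ℝ))⁻¹ by push_cast; ring]
  exact Real.rpow_inv_natCast_pow (factrho_pos j).le (by omega)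

lemma b_succ_pow (j : ℕ) : b (j+3) ^ (j+2) = ((j:ℝ)+2) * b (j+2) ^ (j+1) := by
  have h := b_pow (j+1)
  have h2 := b_pow j
  rw [show j+1+2 = j+3 from rfl] at h
  rw [h, h2, Nat.factorial_succ]
  push_cast
  ring

lemma two_fact_le (j : ℕ) : 2 * (j+1).factorial ≤ (j+2)^(j+1) := by
  induction j with
  | zero => norm_num
  | succ n ih =>
    calc 2 * (n+2).factorial = (n+2) * (2 * (n+1).factorial) := by
          rw [Nat.factorial_succ]; ring
      _ ≤ (n+2) * (n+2)^(n+1) := Nat.mul_le_mul_left _ ih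
      _ = (n+2)^(n+2) := by rw [← pow_succ']
      _ ≤ (n+3)^(n+2) := Nat.pow_le_pow_left (by omega) _

lemma b_lt (j : ℕ) : b (j+2) < (j:ℝ)+2 := by
  apply lt_of_pow_lt_pow_left₀ (j+1) (by positivity)
  rw [b_pow]
  have h : ((j+1).factorial : ℝ) * 2 ≤ ((j:ℝ)+2)^(j+1) := by
    have := two_fact_le j
    have := (Nat.cast_le (α := ℝ)).mpr this
    push_cast at this
    linarith
  have h2 : ((j+1).factorial : ℝ) * rho < ((j+1).factorial : ℝ) * 2 := by
    apply mul_lt_mul_of_pos_left rho_lt_two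
    exact_mod_cast Nat.factorial_pos _
  linarith

lemma one_add_inv_pow_le_e (m : ℕ) : (1 + 1/((m:ℝ)+1))^(m+1) ≤ Real.exp 1 := by
  have h := Real.add_one_le_exp (1/((m:ℝ)+1))
  have h2 : (1 + 1/((m:ℝ)+1))^(m+1) ≤ (Real.exp (1/((m:ℝ)+1)))^(m+1) := by
    apply pow_le_pow_left₀ (by positivity)
    linarith
  have h3 : (Real.exp (1/((m:ℝ)+1)))^(m+1) = Real.exp 1 := by
    rw [← Real.exp_nat_mul]
    congr 1
    push_cast
    field_simp
  rw [h3] at h2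
  exact h2

lemma fact_e (n : ℕ) : ((n:ℝ)+1)^n ≤ (n.factorial : ℝ) * Real.exp 1 ^ n := by
  induction n with
  | zero => norm_num
  | succ m ih =>
    have hsplit : ((m:ℝ)+2)^(m+1) = ((m:ℝ)+1)^(m+1) * (1 + 1/((m:ℝ)+1))^(m+1) := by
      rw [← mul_pow]
      congr 1
      field_simp
      ring
    have h1 : ((m:ℝ)+1)^(m+1) * (1 + 1/((m:ℝ)+1))^(m+1)
        ≤ ((m:ℝ)+1)^(m+1) * Real.exp 1 := by
      apply mul_le_mul_of_nonneg_left (one_add_inv_pow_le_e m) (by positivity)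
    have h2 : ((m:ℝ)+1)^(m+1) * Real.exp 1
        ≤ (((m:ℝ)+1) * ((m.factorial : ℝ) * Real.exp 1 ^ m)) * Real.exp 1 := by
      apply mul_le_mul_of_nonneg_right _ (Real.exp_pos 1).le
      rw [pow_succ']
      exact mul_le_mul_of_nonneg_left ih (by positivity)
    have h3 : (((m:ℝ)+1) * ((m.factorial : ℝ) * Real.exp 1 ^ m)) * Real.exp 1
        = ((m+1).factorial : ℝ) * Real.exp 1 ^ (m+1) := by
      rw [Nat.factorial_succ]
      push_cast
      ring
    push_cast
    calc ((m:ℝ)+1+1)^(m+1) = ((m:ℝ)+2)^(m+1) := by ring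
      _ ≤ ((m+1).factorial : ℝ) * Real.exp 1 ^ (m+1) := by
          rw [hsplit]; rw [← h3]; exact le_trans h1 h2

lemma b_gt (j : ℕ) : ((j:ℝ)+2) < Real.exp 1 * b (j+2) := by
  apply lt_of_pow_lt_pow_left₀ (j+1) (mul_pos (Real.exp_pos 1) (b_pos _)).le
  rw [mul_pow, b_pow]
  have h1 : ((j:ℝ)+2)^(j+1) ≤ ((j+1).factorial : ℝ) * Real.exp 1 ^ (j+1) := by
    have := fact_e (j+1)
    push_cast at this ⊢
    convert this using 2
    ring
  have h2 : ((j+1).factorial : ℝ) * Real.exp 1 ^ (j+1)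
      < Real.exp 1 ^ (j+1) * (((j+1).factorial : ℝ) * rho) := by
    have hf : (0:ℝ) < ((j+1).factorial : ℝ) := by exact_mod_cast Nat.factorial_pos _
    nlinarith [one_lt_rho, pow_pos (Real.exp_pos 1) (j+1), mul_pos hf (pow_pos (Real.exp_pos 1) (j+1))]
  linarith

lemma b_two : b 2 = rho := by
  show (((0+1).factorial : ℝ) * rho) ^ ((1 : ℝ)/((0:ℕ)+1)) = rho
  norm_num

lemma log_rec (j : ℕ) : ((j:ℝ)+2) * Real.log (b (j+3))
    = Real.log ((j:ℝ)+2) + ((j:ℝ)+1) * Real.log (b (j+2)) := by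
  have h := congrArg Real.log (b_succ_pow j)
  rw [Real.log_pow, Real.log_mul (by positivity) (pow_pos (b_pos _) _).ne',
    Real.log_pow] at h
  push_cast at h
  linarith

lemma bernoulli_mul (j : ℕ) :
    ((j:ℝ)+3)^(2*j+5) ≤ ((j:ℝ)+2)^(j+2) * ((j:ℝ)+4)^(j+3) := by
  obtain ⟨m, hm⟩ : ∃ m : ℝ, ((j:ℝ)+3) = m := ⟨_, rfl⟩
  have hj0 : (0:ℝ) ≤ (j:ℝ) := Nat.cast_nonneg j
  have hm1 : (1:ℝ) < m := by rw [← hm]; linarith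
  have hj2 : (j:ℝ)+2 = m - 1 := by rw [← hm]; ring
  have hj4 : (j:ℝ)+4 = m + 1 := by rw [← hm]; ring
  rw [hm, hj2, hj4]
  have hm0 : (0:ℝ) < m := by linarith
  have hinv : 1/m^2 ≤ 1 := by
    rw [div_le_one (by positivity)]; nlinarith
  have hb := one_add_mul_le_pow (a := -(1/m^2)) (by linarith) (j+3)
  have hcast : ((j+3 : ℕ) : ℝ) = m := by push_cast; linarith
  rw [hcast] at hb
  have h1 : (m-1)/m ≤ ((m-1)*(m+1)/m^2)^(j+3) := by
    have e1 : 1 + m * -(1/m^2) = (m-1)/m := by field_simp; ring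
    have e2 : 1 + -(1/m^2) = (m-1)*(m+1)/m^2 := by field_simp; ring
    rw [e1, e2] at hb
    exact hb
  rw [div_pow, div_le_div_iff₀ (by positivity) (by positivity)] at h1
  have h3 : (m-1)*m * (m^(2*j+5)) ≤ (m-1)*m * (((m-1)^(j+2)) * ((m+1)^(j+3))) := by
    calc (m-1)*m * (m^(2*j+5)) = (m-1) * ((m^2)^(j+3)) := by ring
      _ ≤ ((m-1)*(m+1))^(j+3) * m := h1
      _ = (m-1)*m * (((m-1)^(j+2)) * ((m+1)^(j+3))) := by rw [mul_pow]; ring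
  exact le_of_mul_le_mul_left h3 (by nlinarith)

lemma bernoulli_log (j : ℕ) :
    (2*(j:ℝ)+5) * Real.log ((j:ℝ)+3)
      ≤ ((j:ℝ)+2) * Real.log ((j:ℝ)+2) + ((j:ℝ)+3) * Real.log ((j:ℝ)+4) := by
  have h := Real.log_le_log (by positivity) (bernoulli_mul j)
  rw [Real.log_pow, Real.log_mul (by positivity) (by positivity), Real.log_pow,
    Real.log_pow] at h
  push_cast at h
  linarith

lemma Qlem (j : ℕ) : ((j:ℝ)+3) * Real.log ((j:ℝ)+2)
    ≤ Real.log (b (j+2)) + ((j:ℝ)+2) * Real.log ((j:ℝ)+3) := by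
  induction j with
  | zero =>
    have h8 : (8:ℝ) ≤ 9 * rho := by nlinarith [one_lt_rho]
    have h := Real.log_le_log (by norm_num) h8
    rw [Real.log_mul (by norm_num) rho_pos.ne'] at h
    have e8 : Real.log (8:ℝ) = 3 * Real.log 2 := by
      rw [show (8:ℝ) = 2^3 by norm_num, Real.log_pow]; push_cast; ring
    have e9 : Real.log (9:ℝ) = 2 * Real.log 3 := by
      rw [show (9:ℝ) = 3^2 by norm_num, Real.log_pow]; push_cast; ring
    rw [e8, e9] at h
    rw [b_two]
    push_cast
    norm_num
    linarith
  | succ n ih =>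
    have hrec := log_rec n
    have hber := bernoulli_log n
    have h1 : ((n:ℝ)+1) * (((n:ℝ)+3)*Real.log ((n:ℝ)+2))
        ≤ ((n:ℝ)+1) * (Real.log (b (n+2)) + ((n:ℝ)+2)*Real.log ((n:ℝ)+3)) :=
      mul_le_mul_of_nonneg_left ih (by positivity)
    have h2 : ((n:ℝ)+2) * (((n:ℝ)+2)*Real.log ((n:ℝ)+2) - ((n:ℝ)+1)*Real.log ((n:ℝ)+3))
        ≤ ((n:ℝ)+2) * Real.log (b (n+3)) := by
      nlinarith [hrec, h1]
    have h3 := le_of_mul_le_mul_left h2 (by positivity : (0:ℝ) < (n:ℝ)+2)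
    have e2 : ((n+1:ℕ):ℝ)+2 = (n:ℝ)+3 := by push_cast; ring
    have e3 : ((n+1:ℕ):ℝ)+3 = (n:ℝ)+4 := by push_cast; ring
    have e4 : b (n+1+2) = b (n+3) := rfl
    rw [e2, e3, e4]
    linarith [hber, h3]

lemma lam_split (j : ℕ) : lam (j+2) = Real.log (b (j+3)) - Real.log (b (j+2)) := by
  rw [lam, Real.log_div (b_pos _).ne' (b_pos _).ne']

lemma lam_eq (j : ℕ) : ((j:ℝ)+2) * lam (j+2)
    = Real.log ((j:ℝ)+2) - Real.log (b (j+2)) := by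
  rw [lam_split]
  have h := log_rec j
  nlinarith [h]

lemma b_mono (j : ℕ) : b (j+2) < b (j+3) := by
  apply lt_of_pow_lt_pow_left₀ (j+2) (b_pos _).le
  rw [b_succ_pow]
  calc b (j+2) ^ (j+2) = b (j+2) ^ (j+1) * b (j+2) := by rw [pow_succ]
    _ < b (j+2) ^ (j+1) * ((j:ℝ)+2) := by
        exact mul_lt_mul_of_pos_left (b_lt j) (pow_pos (b_pos _) _)
    _ = ((j:ℝ)+2) * b (j+2) ^ (j+1) := by ring

lemma lam_pos (j : ℕ) : 0 < lam (j+2) := by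
  rw [lam_split]
  have := Real.log_lt_log (b_pos (j+2)) (b_mono j)
  linarith

lemma lam_lt_one (j : ℕ) : ((j:ℝ)+2) * lam (j+2) < 1 := by
  rw [lam_eq]
  have h := Real.log_lt_log (by positivity) (b_gt j)
  rw [Real.log_mul (Real.exp_pos 1).ne' (b_pos _).ne', Real.log_exp] at h
  linarith

lemma lam_mono (j : ℕ) : ((j:ℝ)+2) * lam (j+2) ≤ ((j:ℝ)+3) * lam (j+3) := by
  have hQ := Qlem j
  have hrec := log_rec j
  have h2 : ((j:ℝ)+2) * Real.log (b (j+3))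
      ≤ ((j:ℝ)+2) * (Real.log (b (j+2)) + Real.log ((j:ℝ)+3) - Real.log ((j:ℝ)+2)) := by
    nlinarith [hQ, hrec]
  have h3 := le_of_mul_le_mul_left h2 (by positivity : (0:ℝ) < (j:ℝ)+2)
  have e1 := lam_eq j
  have e2 := lam_eq (j+1)
  push_cast at e2
  have e4 : b (j+1+2) = b (j+3) := rfl
  have e5 : lam (j+1+2) = lam (j+3) := rfl
  rw [e4, e5, show ((j:ℝ)+1+2) = (j:ℝ)+3 by ring] at e2
  linarith [e1, e2, h3]

lemma alpha_succ (j : ℕ) : alpha (j+4)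
    = alpha (j+3) / (1 + ((j:ℝ) + 4) * (lam (j+3) - lam (j+4))) := rfl

lemma D_pos (j : ℕ) : 0 < 1 + ((j:ℝ) + 4) * (lam (j+3) - lam (j+4)) := by
  have h1 : 0 < lam (j+3) := by
    have := lam_pos (j+1)
    rwa [show j+1+2 = j+3 from rfl] at this
  have h2 : ((j:ℝ)+4) * lam (j+4) < 1 := by
    have := lam_lt_one (j+2)
    rw [show j+2+2 = j+4 from rfl] at this
    push_cast at this
    linarith [this]
  nlinarith [mul_pos (by positivity : (0:ℝ) < (j:ℝ)+4) h1]

lemma alpha_pos (j : ℕ) : 0 < alpha (j+3) := by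
  induction j with
  | zero =>
    show 0 < 6 / (rho ^ 4 * b 3 * b 5)
    exact div_pos (by norm_num)
      (mul_pos (mul_pos (pow_pos rho_pos 4) (b_pos 3)) (b_pos 5))
  | succ n ih =>
    rw [show n+1+3 = n+4 from rfl, alpha_succ]
    exact div_pos ih (D_pos n)

lemma b5_pow : b 5 ^ 4 = 24 * rho := by
  have := b_pow 3
  norm_num [Nat.factorial] at this
  linarith [this]

lemma base_case : alpha 2 * b 2 < alpha 3 * b 3 := by
  have hb3 := b_pos 3
  have hb5 := b_pos 5
  have hρ := rho_pos
  have hb5lt : rho ^ 2 * b 5 < 3 := by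
    have h1 : b 5 < 3 / rho ^ 2 := by
      apply lt_of_pow_lt_pow_left₀ 4 (by positivity)
      rw [b5_pow, div_pow, show (rho^2)^4 = (rho^4)^2 by ring, rho_pow4]
      norm_num
      nlinarith [rho_lt_43, rho_pos]
    rw [lt_div_iff₀ (by positivity)] at h1
    nlinarith [h1]
  show 2 / rho ^ 3 * b 2 < 6 / (rho ^ 4 * b 3 * b 5) * b 3
  rw [b_two, div_mul_eq_mul_div, div_mul_eq_mul_div,
    div_lt_div_iff₀ (by positivity) (by positivity)]
  nlinarith [mul_lt_mul_of_pos_left hb5lt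
    (by positivity : (0:ℝ) < 2 * rho ^ 3 * b 3)]

theorem a_strict_mono (k : ℕ) (hk : 2 ≤ k) :
    alpha k * b k < alpha (k+1) * b (k+1) := by
  obtain ⟨m, rfl⟩ : ∃ m, k = 2 + m := ⟨k - 2, by omega⟩
  cases m with
  | zero => exact base_case
  | succ i =>
    rw [show 2+(i+1) = i+3 by omega, show i+3+1 = i+4 from rfl]
    have hD := D_pos i
    have hα := alpha_pos i
    have hlam3 : 0 < lam (i+3) := by
      have := lam_pos (i+1)
      rwa [show i+1+2 = i+3 from rfl] at this
    have hmono : ((i:ℝ)+3) * lam (i+3) ≤ ((i:ℝ)+4) * lam (i+4) := by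
      have := lam_mono (i+1)
      rw [show i+1+2 = i+3 from rfl, show i+1+3 = i+4 from rfl] at this
      push_cast at this
      linarith [this]
    have hexp : Real.exp (lam (i+3)) = b (i+4) / b (i+3) := by
      rw [show lam (i+3) = Real.log (b (i+4) / b (i+3)) from rfl,
        Real.exp_log (div_pos (b_pos _) (b_pos _))]
    have hDlt : 1 + ((i:ℝ) + 4) * (lam (i+3) - lam (i+4)) < Real.exp (lam (i+3)) := by
      have h1 : 1 + ((i:ℝ) + 4) * (lam (i+3) - lam (i+4)) ≤ 1 + lam (i+3) := by
        nlinarith [hmono]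
      have h2 := Real.add_one_lt_exp hlam3.ne'
      linarith
    have hbd : b (i+3) * (1 + ((i:ℝ) + 4) * (lam (i+3) - lam (i+4))) < b (i+4) := by
      rw [hexp] at hDlt
      have := (lt_div_iff₀ (b_pos (i+3))).mp hDlt
      linarith [this]
    rw [alpha_succ, div_mul_eq_mul_div, lt_div_iff₀ hD]
    calc alpha (i+3) * b (i+3) * (1 + ((i:ℝ) + 4) * (lam (i+3) - lam (i+4)))
        = alpha (i+3) * (b (i+3) * (1 + ((i:ℝ) + 4) * (lam (i+3) - lam (i+4)))) := by ring
      _ < alpha (i+3) * b (i+4) := mul_lt_mul_of_pos_left hbd hα
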